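/- A function h : ℝ → ℝ is a 2π-periodic C³ function with h(θ) > 0 for all θ satisfying h(θ)³·(h'(θ) + h'''(θ)) = 0 for all θ if and only if there exist constants c₁ > 0, c₂ ∈ ℝ and θ₀ ∈ ℝ with |c₂| < c₁ such that h(θ) = c₁ + c₂·sin(θ − θ₀) for all θ ∈ ℝ. -/

import Mathlib

/-!
Since `h > 0`, the equation reduces to the linear equation `h' + h''' = 0`. Then `h + h''` is a
constant `c₁`, and `u = h - c₁` solves the oscillator equation `u'' = -u`, whose solutions are
determined by `u 0, u' 0` because the energy `u² + u'²` is conserved. Hence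
`h = c₁ + A cos + B sin = c₁ + c₂ sin (· - θ₀)`, and evaluating at `θ₀ ± π/2` shows that positivity
is equivalent to `|c₂| < c₁`.
-/

open Real

theorem eq_zero_of_hasDerivAt_neg {u u' : ℝ → ℝ} (hu : ∀ x, HasDerivAt u (u' x) x)
    (hu' : ∀ x, HasDerivAt u' (-u x) x) (h₀ : u 0 = 0) (h₀' : u' 0 = 0) (x : ℝ) : u x = 0 := by
  have henergy : ∀ y, HasDerivAt (fun y => u y ^ 2 + u' y ^ 2) 0 y := fun y =>
    (((hu y).pow 2).add ((hu' y).pow 2)).congr_deriv (by ring)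
  have hconst : u x ^ 2 + u' x ^ 2 = u 0 ^ 2 + u' 0 ^ 2 :=
    is_const_of_deriv_eq_zero (fun y => (henergy y).differentiableAt)
      (fun y => (henergy y).deriv) x 0
  rw [h₀, h₀'] at hconst
  nlinarith [sq_nonneg (u x), sq_nonneg (u' x)]

theorem eq_mul_cos_add_mul_sin_of_hasDerivAt_neg {u u' : ℝ → ℝ}
    (hu : ∀ x, HasDerivAt u (u' x) x) (hu' : ∀ x, HasDerivAt u' (-u x) x) (x : ℝ) :
    u x = u 0 * cos x + u' 0 * sin x := by
  have hv : ∀ y, HasDerivAt (fun y => u y - (u 0 * cos y + u' 0 * sin y))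
      (u' y - (-u 0 * sin y + u' 0 * cos y)) y := fun y =>
    ((hu y).sub (((hasDerivAt_cos y).const_mul (u 0)).add
      ((hasDerivAt_sin y).const_mul (u' 0)))).congr_deriv (by ring)
  have hv' : ∀ y, HasDerivAt (fun y => u' y - (-u 0 * sin y + u' 0 * cos y))
      (-(u y - (u 0 * cos y + u' 0 * sin y))) y := fun y =>
    ((hu' y).sub (((hasDerivAt_sin y).const_mul (-u 0)).add
      ((hasDerivAt_cos y).const_mul (u' 0)))).congr_deriv (by ring)
  have := eq_zero_of_hasDerivAt_neg hv hv' (by simp) (by simp) x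
  linarith

theorem exists_eq_const_add_mul_cos_add_mul_sin {h : ℝ → ℝ} (hC : ContDiff ℝ 3 h)
    (hode : ∀ θ, deriv h θ + deriv^[3] h θ = 0) :
    ∃ c A B : ℝ, ∀ θ, h θ = c + (A * cos θ + B * sin θ) := by
  have hd₁ : Differentiable ℝ h := hC.differentiable (by norm_num)
  have hd₂ : Differentiable ℝ (deriv h) := by
    simpa using (hC.iterate_deriv' 2 1).differentiable (by norm_num)
  have hd₃ : Differentiable ℝ (deriv (deriv h)) := by
    simpa using (hC.iterate_deriv' 1 2).differentiable (by norm_num)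
  have hconst : ∀ θ, h θ + deriv (deriv h) θ = h 0 + deriv (deriv h) 0 := fun θ =>
    is_const_of_deriv_eq_zero (hd₁.add hd₃)
      (fun y => by simpa [deriv_add (hd₁ y) (hd₃ y)] using hode y) θ 0
  set c := h 0 + deriv (deriv h) 0
  have hu : ∀ θ, HasDerivAt (fun θ => h θ - c) (deriv h θ) θ := fun θ =>
    (hd₁ θ).hasDerivAt.sub_const c
  have hu' : ∀ θ, HasDerivAt (deriv h) (-(h θ - c)) θ := fun θ =>
    (hd₂ θ).hasDerivAt.congr_deriv (by linarith [hconst θ])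
  refine ⟨c, h 0 - c, deriv h 0, fun θ => ?_⟩
  linarith [eq_mul_cos_add_mul_sin_of_hasDerivAt_neg hu hu' θ]

theorem exists_mul_sin_sub_eq (A B : ℝ) :
    ∃ c θ₀ : ℝ, ∀ θ, A * cos θ + B * sin θ = c * sin (θ - θ₀) := by
  set z : ℂ := ⟨B, -A⟩
  refine ⟨‖z‖, z.arg, fun θ => ?_⟩
  have hre : ‖z‖ * cos z.arg = B := Complex.norm_mul_cos_arg z
  have him : ‖z‖ * sin z.arg = -A := Complex.norm_mul_sin_arg z
  rw [sin_sub]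
  linear_combination (-sin θ) * hre + cos θ * him

theorem forall_const_add_mul_sin_sub_pos_iff (c₁ c₂ θ₀ : ℝ) :
    (∀ θ, 0 < c₁ + c₂ * sin (θ - θ₀)) ↔ |c₂| < c₁ := by
  constructor
  · intro hpos
    have hplus := hpos (θ₀ + π / 2)
    have hminus := hpos (θ₀ - π / 2)
    simp only [add_sub_cancel_left, sub_sub_cancel_left, sin_neg, sin_pi_div_two] at hplus hminus
    exact abs_lt.2 ⟨by linarith, by linarith⟩
  · intro hc θ
    have : |c₂ * sin (θ - θ₀)| ≤ |c₂| := by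
      rw [abs_mul]
      exact mul_le_of_le_one_right (abs_nonneg _) (abs_sin_le_one _)
    linarith [neg_abs_le (c₂ * sin (θ - θ₀))]

theorem deriv_add_iteratedDeriv_three_const_add_mul_sin_sub (c₁ c₂ θ₀ θ : ℝ) :
    deriv (fun θ => c₁ + c₂ * sin (θ - θ₀)) θ
      + iteratedDeriv 3 (fun θ => c₁ + c₂ * sin (θ - θ₀)) θ = 0 := by
  have h₁ : deriv (fun θ => c₁ + c₂ * sin (θ - θ₀)) = fun θ => c₂ * cos (θ - θ₀) := by
    funext; simp
  have h₂ : deriv (fun θ => c₂ * cos (θ - θ₀)) = fun θ => -(c₂ * sin (θ - θ₀)) := by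
    funext; simp
  have h₃ : deriv (fun θ => -(c₂ * sin (θ - θ₀))) = fun θ => -(c₂ * cos (θ - θ₀)) := by
    funext; simp
  simp only [iteratedDeriv_eq_iterate, Function.iterate_succ, Function.iterate_zero,
    Function.comp_apply, id, h₁, h₂, h₃]
  ring

theorem stmt_5 (h : ℝ → ℝ) :
    (Function.Periodic h (2 * π) ∧ ContDiff ℝ 3 h ∧ (∀ θ, 0 < h θ) ∧
      (∀ θ, (h θ) ^ 3 * (deriv h θ + iteratedDeriv 3 h θ) = 0))
    ↔ ∃ c₁ c₂ θ₀ : ℝ, 0 < c₁ ∧ |c₂| < c₁ ∧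
        ∀ θ : ℝ, h θ = c₁ + c₂ * Real.sin (θ - θ₀) := by
  constructor
  · rintro ⟨-, hC, hpos, heq⟩
    have hode : ∀ θ, deriv h θ + deriv^[3] h θ = 0 := fun θ => by
      simpa [iteratedDeriv_eq_iterate, (hpos θ).ne'] using heq θ
    obtain ⟨c₁, A, B, hABform⟩ := exists_eq_const_add_mul_cos_add_mul_sin hC hode
    obtain ⟨c₂, θ₀, hphase⟩ := exists_mul_sin_sub_eq A B
    have hform : ∀ θ, h θ = c₁ + c₂ * sin (θ - θ₀) := fun θ => by rw [hABform, hphase]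
    have hc₂ : |c₂| < c₁ :=
      (forall_const_add_mul_sin_sub_pos_iff c₁ c₂ θ₀).1 fun θ => hform θ ▸ hpos θ
    exact ⟨c₁, c₂, θ₀, (abs_nonneg c₂).trans_lt hc₂, hc₂, hform⟩
  · rintro ⟨c₁, c₂, θ₀, -, hc₂, hform⟩
    obtain rfl : h = fun θ => c₁ + c₂ * sin (θ - θ₀) := funext hform
    refine ⟨?_, by fun_prop, (forall_const_add_mul_sin_sub_pos_iff c₁ c₂ θ₀).2 hc₂, fun θ => ?_⟩
    · exact (sin_periodic.sub_const θ₀).comp fun s => c₁ + c₂ * s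
    · rw [deriv_add_iteratedDeriv_three_const_add_mul_sin_sub, mul_zero]
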